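/- For 0 < q < 1 and m, m' ∈ ℕ, the subspaces V_m of A(SU_q(2)) satisfy V_m · V_{m'} ⊆ V_{m+m'}. -/

import Mathlib

noncomputable section

namespace QAlg

/-- Generators of a free *-algebra: `inl i` is the generator `z i`, and
`inr i` is its formal adjoint `(z i)*`. -/
abbrev Gen (X : Type) := X ⊕ X

/-- The free algebra on the doubled generating set, realized as the monoid
algebra of the free monoid. -/
abbrev F (X : Type) := MonoidAlgebra ℂ (FreeMonoid (Gen X))

/-- The *-operation on words: reverse the word and exchange the two copies
of the generators. -/
def wordStar {X : Type} (w : FreeMonoid (Gen X)) : FreeMonoid (Gen X) :=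
  FreeMonoid.ofList (((FreeMonoid.toList w).map Sum.swap).reverse)

lemma wordStar_mul {X : Type} (w v : FreeMonoid (Gen X)) :
    wordStar (w * v) = wordStar v * wordStar w := by
  simp [wordStar, FreeMonoid.toList_mul, FreeMonoid.ofList_append]

lemma wordStar_wordStar {X : Type} (w : FreeMonoid (Gen X)) : wordStar (wordStar w) = w := by
  simp [wordStar, List.map_reverse, List.map_map, Sum.swap_swap_eq]

/-- The canonical conjugate-linear antimultiplicative involution on the free
algebra `F X`, determined by `star (z i) = (z i)*` and complex conjugation
on scalars. -/
def starF {X : Type} (f : F X) : F X :=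
  Finsupp.sum f.coeff fun w c => MonoidAlgebra.single (wordStar w) ((starRingEnd ℂ) c)

lemma starF_single {X : Type} (w : FreeMonoid (Gen X)) (c : ℂ) :
    starF (MonoidAlgebra.single w c) = MonoidAlgebra.single (wordStar w) ((starRingEnd ℂ) c) := by
  classical
  unfold starF
  rw [MonoidAlgebra.coeff_single]
  refine Finsupp.sum_single_index ?_
  simp

lemma starF_zero {X : Type} : starF (0 : F X) = 0 := by
  unfold starF
  rw [MonoidAlgebra.coeff_zero]
  exact Finsupp.sum_zero_index

lemma starF_add {X : Type} (f g : F X) : starF (f + g) = starF f + starF g := by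
  classical
  unfold starF
  rw [MonoidAlgebra.coeff_add]
  refine Finsupp.sum_add_index' (fun w => by simp) (fun w c₁ c₂ => by
    simp [map_add, MonoidAlgebra.single_add])

lemma starF_single_mul {X : Type} (w : FreeMonoid (Gen X)) (c : ℂ) (g : F X) :
    starF (MonoidAlgebra.single w c * g) = starF g * starF (MonoidAlgebra.single w c) := by
  classical
  induction g using MonoidAlgebra.induction with
  | zero => simp [starF_zero]
  | single_add v d g _ _ ihg =>
    rw [mul_add, starF_add, starF_add, add_mul, ihg]
    congr 1
    rw [MonoidAlgebra.single_mul_single, starF_single, starF_single, starF_single,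
      MonoidAlgebra.single_mul_single, wordStar_mul, map_mul, mul_comm]

lemma starF_mul {X : Type} (f g : F X) : starF (f * g) = starF g * starF f := by
  classical
  induction f using MonoidAlgebra.induction with
  | zero => simp [starF_zero]
  | single_add w c f _ _ ih =>
    rw [add_mul, starF_add, starF_add, ih, mul_add, starF_single_mul]

lemma starF_starF {X : Type} (f : F X) : starF (starF f) = f := by
  classical
  induction f using MonoidAlgebra.induction with
  | zero => simp [starF_zero]
  | single_add w c f _ _ ih =>
    rw [starF_add, starF_add, ih, starF_single, starF_single, wordStar_wordStar,
      Complex.conj_conj]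

/-- The free *-algebra structure on `F X`. -/
def starRingF (X : Type) : StarRing (F X) where
  star := starF
  star_involutive := starF_starF
  star_mul := starF_mul
  star_add := starF_add

/-- The generator `z i` inside the free *-algebra. -/
def zF {X : Type} (i : X) : F X := MonoidAlgebra.of ℂ _ (FreeMonoid.of (Sum.inl i))

/-- The formal adjoint `(z i)*` inside the free *-algebra. -/
def zsF {X : Type} (i : X) : F X := MonoidAlgebra.of ℂ _ (FreeMonoid.of (Sum.inr i))

/-- The defining relations of quantum `SU(2)` (with `zF 0 = α`, `zF 1 = β`,
`zsF i` playing the role of the adjoint generators), together with their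
images under the *-operation. -/
inductive surel (q : ℝ) : F (Fin 2) → F (Fin 2) → Prop
  | r1 : surel q (zF 1 * zF 0) ((q : ℂ) • (zF 0 * zF 1))
  | r2 : surel q (zsF 1 * zF 0) ((q : ℂ) • (zF 0 * zsF 1))
  | r3 : surel q (zF 1 * zsF 1) (zsF 1 * zF 1)
  | r4 : surel q (zF 0 * zsF 0 + zF 1 * zsF 1) 1
  | r5 : surel q (zsF 0 * zF 0 + ((q ^ 2 : ℝ) : ℂ) • (zF 1 * zsF 1)) 1
  | star_rel {a b} : surel q a b → surel q (starF a) (starF b)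

/-- The coordinate *-algebra `A(SU_q(2))`. -/
abbrev SU (q : ℝ) := RingQuot (surel q)

noncomputable instance (q : ℝ) : StarRing (SU q) :=
  @RingQuot.starRing _ _ (starRingF _) (surel q) (fun _ _ h => surel.star_rel h)

/-- The generator `α` of `A(SU_q(2))`. -/
def αg (q : ℝ) : SU q := RingQuot.mkAlgHom ℂ (surel q) (zF 0)

/-- The generator `β` of `A(SU_q(2))`. -/
def βg (q : ℝ) : SU q := RingQuot.mkAlgHom ℂ (surel q) (zF 1)

/-- The elements `e_{j,k,l}` of `A(SU_q(2))`: `α^j β^k (β*)^l` for `j ≥ 0`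
and `β^k (β*)^l (α*)^{-j}` for `j < 0`. -/
def e (q : ℝ) (j : ℤ) (k l : ℕ) : SU q :=
  if 0 ≤ j then αg q ^ j.toNat * βg q ^ k * star (βg q) ^ l
  else βg q ^ k * star (βg q) ^ l * star (αg q) ^ (-j).toNat

/-- The subspace `V_m ⊆ A(SU_q(2))` spanned by the `e_{j,k,l}` with `k + l ≥ m`. -/
def V (q : ℝ) (m : ℕ) : Submodule ℂ (SU q) :=
  Submodule.span ℂ {x | ∃ (j : ℤ) (k l : ℕ), m ≤ k + l ∧ x = e q j k l}

/-! Right multiplication by `β` or `β*` maps `V_m` into `V_{m+1}`, and by `α` or `α*` (for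
`q ≠ 0`) maps `V_m` into itself: pushing the new factor through `e_{j,k,l}` into normal form only
rescales by powers of `q^{±1}`, except when `α` meets `α*` or vice versa, and there
`α*α = 1 - q²ββ*` and `αα* = 1 - ββ*` produce terms whose `k + l` is unchanged or raised by 2.
As `e_{j,k,l}` is a product of powers of the generators with `k + l` factors `β, β*`, this gives
`V_m · e_{j,k,l} ⊆ V_{m+k+l}`. -/

section QCommute

variable {R A : Type*} [Monoid R] [Monoid A] [MulAction R A] [IsScalarTower R A A]
  [SMulCommClass R A A]

lemma pow_mul_of_mul_eq_smul {x y : A} {c : R} (h : y * x = c • (x * y)) (n : ℕ) :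
    y ^ n * x = c ^ n • (x * y ^ n) := by
  induction n with
  | zero => simp
  | succ n ih =>
    rw [pow_succ, mul_assoc, h, mul_smul_comm, ← mul_assoc, ih, smul_mul_assoc, smul_smul,
      ← pow_succ', mul_assoc, ← pow_succ]

end QCommute

lemma starF_zF {X : Type} (i : X) : starF (zF i) = zsF i := by
  simp [zF, zsF, MonoidAlgebra.of_apply, starF_single, wordStar]

lemma starF_zsF {X : Type} (i : X) : starF (zsF i) = zF i := by
  simp [zF, zsF, MonoidAlgebra.of_apply, starF_single, wordStar]

lemma starF_smul {X : Type} (c : ℂ) (f : F X) :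
    starF (c • f) = (starRingEnd ℂ) c • starF f := by
  classical
  induction f using MonoidAlgebra.induction with
  | zero => simp [starF_zero]
  | single_add w d g _ _ ih =>
    rw [smul_add, starF_add, starF_add, ih, MonoidAlgebra.smul_single, starF_single,
      starF_single, smul_add, MonoidAlgebra.smul_single, smul_eq_mul, smul_eq_mul, map_mul]

section Relations

variable (q : ℝ)

lemma star_mkAlgHom (x : F (Fin 2)) :
    star (RingQuot.mkAlgHom ℂ (surel q) x) = RingQuot.mkAlgHom ℂ (surel q) (starF x) := by
  simp only [RingQuot.mkAlgHom_def, RingQuot.mkRingHom_def]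
  rfl

lemma star_αg : star (αg q) = RingQuot.mkAlgHom ℂ (surel q) (zsF 0) := by
  rw [αg, star_mkAlgHom, starF_zF]

lemma star_βg : star (βg q) = RingQuot.mkAlgHom ℂ (surel q) (zsF 1) := by
  rw [βg, star_mkAlgHom, starF_zF]

lemma βg_mul_αg : βg q * αg q = (q : ℂ) • (αg q * βg q) := by
  rw [αg, βg, ← map_mul, ← map_mul, ← map_smul]
  exact RingQuot.mkAlgHom_rel ℂ surel.r1

lemma star_βg_mul_αg : star (βg q) * αg q = (q : ℂ) • (αg q * star (βg q)) := by
  rw [star_βg, αg, ← map_mul, ← map_mul, ← map_smul]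
  exact RingQuot.mkAlgHom_rel ℂ surel.r2

instance isStarNormal_βg : IsStarNormal (βg q) where
  star_comm_self := by
    rw [commute_iff_eq, star_βg, βg, ← map_mul, ← map_mul]
    exact (RingQuot.mkAlgHom_rel ℂ surel.r3).symm

lemma αg_mul_star_αg : αg q * star (αg q) = 1 - βg q * star (βg q) := by
  rw [eq_sub_iff_add_eq, star_αg, star_βg, αg, βg, ← map_mul, ← map_mul, ← map_add,
    ← map_one (RingQuot.mkAlgHom ℂ (surel q))]
  exact RingQuot.mkAlgHom_rel ℂ surel.r4

lemma star_αg_mul_αg :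
    star (αg q) * αg q = 1 - ((q ^ 2 : ℝ) : ℂ) • (βg q * star (βg q)) := by
  rw [eq_sub_iff_add_eq, star_αg, star_βg, αg, βg, ← map_mul, ← map_mul, ← map_smul, ← map_add,
    ← map_one (RingQuot.mkAlgHom ℂ (surel q))]
  exact RingQuot.mkAlgHom_rel ℂ surel.r5

lemma star_αg_mul_star_βg :
    star (αg q) * star (βg q) = (q : ℂ) • (star (βg q) * star (αg q)) := by
  have h := RingQuot.mkAlgHom_rel ℂ (surel.star_rel (surel.r1 (q := q)))
  rw [starF_mul, starF_smul, starF_mul, starF_zF, starF_zF, Complex.conj_ofReal] at h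
  rw [star_αg, star_βg, ← map_mul, ← map_mul, ← map_smul]
  exact h

lemma star_αg_mul_βg : star (αg q) * βg q = (q : ℂ) • (βg q * star (αg q)) := by
  have h := RingQuot.mkAlgHom_rel ℂ (surel.star_rel (surel.r2 (q := q)))
  rw [starF_mul, starF_smul, starF_mul, starF_zF, starF_zsF, Complex.conj_ofReal] at h
  rw [star_αg, βg, ← map_mul, ← map_mul, ← map_smul]
  exact h

end Relations

section Filtration

variable {q : ℝ}

lemma e_natCast (n k l : ℕ) : e q n k l = αg q ^ n * βg q ^ k * star (βg q) ^ l := by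
  simp [e]

lemma e_negSucc (n k l : ℕ) :
    e q (Int.negSucc n) k l = βg q ^ k * star (βg q) ^ l * star (αg q) ^ (n + 1) := by
  simp [e, Int.neg_negSucc]

lemma e_neg_natCast (n k l : ℕ) :
    e q (-n) k l = βg q ^ k * star (βg q) ^ l * star (αg q) ^ n := by
  rcases n with _ | n
  · simp [e]
  · exact e_negSucc n k l

lemma βg_pow_mul_star_βg_pow_mul_βg_mul_star_βg (k l : ℕ) :
    βg q ^ k * star (βg q) ^ l * βg q * star (βg q) = βg q ^ (k + 1) * star (βg q) ^ (l + 1) := by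
  rw [mul_assoc (βg q ^ k), (star_comm_self.pow_left l).eq, ← mul_assoc, ← pow_succ, mul_assoc,
    ← pow_succ]

lemma βg_mul_star_βg_mul_βg_pow_mul_star_βg_pow (k l : ℕ) :
    βg q * star (βg q) * (βg q ^ k * star (βg q) ^ l) =
      βg q ^ (k + 1) * star (βg q) ^ (l + 1) := by
  rw [mul_assoc, ← mul_assoc (star (βg q)), (star_comm_self.pow_right k).eq, mul_assoc,
    ← pow_succ', ← mul_assoc, ← pow_succ']

lemma e_mem_V (j : ℤ) {m k l : ℕ} (h : m ≤ k + l) : e q j k l ∈ V q m :=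
  Submodule.subset_span ⟨j, k, l, h, rfl⟩

lemma V_antitone : Antitone (V q) := fun _ _ h =>
  Submodule.span_mono fun _ ⟨j, k, l, hkl, hx⟩ => ⟨j, k, l, h.trans hkl, hx⟩

variable (q) in
def ShiftsV (g : SU q) (d : ℕ) : Prop := ∀ m, ∀ x ∈ V q m, x * g ∈ V q (m + d)

lemma shiftsV_of_e_mul {g : SU q} {d : ℕ} (h : ∀ j k l, e q j k l * g ∈ V q (k + l + d)) :
    ShiftsV q g d := by
  intro m x hx
  induction hx using Submodule.span_induction with
  | mem x hx =>
    obtain ⟨j, k, l, hkl, rfl⟩ := hx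
    exact V_antitone (by omega) (h j k l)
  | zero => simp
  | add x y _ _ hx hy => rw [add_mul]; exact add_mem hx hy
  | smul c x _ hx => rw [smul_mul_assoc]; exact Submodule.smul_mem _ c hx

lemma ShiftsV.mul {g h : SU q} {d d' : ℕ} (hg : ShiftsV q g d) (hh : ShiftsV q h d') :
    ShiftsV q (g * h) (d + d') := fun m x hx => by
  rw [← mul_assoc, ← add_assoc]
  exact hh _ _ (hg m x hx)

lemma ShiftsV.pow {g : SU q} {d : ℕ} (hg : ShiftsV q g d) (n : ℕ) :
    ShiftsV q (g ^ n) (n * d) := by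
  induction n with
  | zero => intro m x hx; simpa using hx
  | succ n ih => rw [pow_succ, Nat.succ_mul]; exact ih.mul hg

lemma shiftsV_βg : ShiftsV q (βg q) 1 := by
  refine shiftsV_of_e_mul fun j k l => ?_
  rcases j with n | n
  · rw [Int.ofNat_eq_natCast]
    have : e q n k l * βg q = e q n (k + 1) l := by
      rw [e_natCast, e_natCast, mul_assoc, (star_comm_self.pow_left l).eq, ← mul_assoc,
        mul_assoc _ (βg q ^ k), ← pow_succ]
    rw [this]
    exact e_mem_V _ (by omega)
  · have : e q (Int.negSucc n) k l * βg q =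
        (q : ℂ) ^ (n + 1) • e q (Int.negSucc n) (k + 1) l := by
      rw [e_negSucc, e_negSucc, mul_assoc, pow_mul_of_mul_eq_smul (star_αg_mul_βg q),
        mul_smul_comm, ← mul_assoc, mul_assoc _ (star (βg q) ^ l),
        (star_comm_self.pow_left l).eq, ← mul_assoc, ← pow_succ]
    rw [this]
    exact Submodule.smul_mem _ _ (e_mem_V _ (by omega))

lemma shiftsV_star_βg : ShiftsV q (star (βg q)) 1 := by
  refine shiftsV_of_e_mul fun j k l => ?_
  rcases j with n | n
  · rw [Int.ofNat_eq_natCast, e_natCast, mul_assoc, ← pow_succ, ← e_natCast]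
    exact e_mem_V _ (by omega)
  · have : e q (Int.negSucc n) k l * star (βg q) =
        (q : ℂ) ^ (n + 1) • e q (Int.negSucc n) k (l + 1) := by
      rw [e_negSucc, e_negSucc, mul_assoc, pow_mul_of_mul_eq_smul (star_αg_mul_star_βg q),
        mul_smul_comm, ← mul_assoc, mul_assoc _ (star (βg q) ^ l), ← pow_succ]
    rw [this]
    exact Submodule.smul_mem _ _ (e_mem_V _ (by omega))

lemma shiftsV_αg : ShiftsV q (αg q) 0 := by
  refine shiftsV_of_e_mul fun j k l => ?_
  rcases j with n | n
  · rw [Int.ofNat_eq_natCast]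
    have : e q n k l * αg q = ((q : ℂ) ^ l * (q : ℂ) ^ k) • e q (n + 1 : ℕ) k l := by
      rw [e_natCast, e_natCast, mul_assoc, pow_mul_of_mul_eq_smul (star_βg_mul_αg q),
        mul_smul_comm, ← mul_assoc, mul_assoc _ (βg q ^ k), pow_mul_of_mul_eq_smul (βg_mul_αg q),
        mul_smul_comm, smul_mul_assoc, smul_smul, ← mul_assoc, ← pow_succ]
    rw [this]
    exact Submodule.smul_mem _ _ (e_mem_V _ le_rfl)
  · have hαα : star (αg q) ^ (n + 1) * αg q = star (αg q) ^ n -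
        ((q ^ 2 : ℝ) : ℂ) • (star (αg q) ^ n * (βg q * star (βg q))) := by
      rw [pow_succ, mul_assoc, star_αg_mul_αg, mul_sub, mul_one, mul_smul_comm]
    have hαβ : star (αg q) ^ n * (βg q * star (βg q)) =
        ((q : ℂ) ^ n * (q : ℂ) ^ n) • (βg q * star (βg q) * star (αg q) ^ n) := by
      rw [← mul_assoc, pow_mul_of_mul_eq_smul (star_αg_mul_βg q), smul_mul_assoc, mul_assoc,
        pow_mul_of_mul_eq_smul (star_αg_mul_star_βg q), mul_smul_comm, smul_smul, mul_assoc]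
    have : e q (Int.negSucc n) k l * αg q = e q (-n) k l -
        (((q ^ 2 : ℝ) : ℂ) * ((q : ℂ) ^ n * (q : ℂ) ^ n)) • e q (-n) (k + 1) (l + 1) := by
      rw [e_negSucc, mul_assoc, hαα, hαβ, smul_smul, mul_sub, mul_smul_comm, e_neg_natCast,
        e_neg_natCast]
      simp only [← mul_assoc, βg_pow_mul_star_βg_pow_mul_βg_mul_star_βg]
    rw [this]
    exact sub_mem (e_mem_V _ le_rfl) (Submodule.smul_mem _ _ (e_mem_V _ (by omega)))

lemma shiftsV_star_αg (hq : (q : ℂ) ≠ 0) : ShiftsV q (star (αg q)) 0 := by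
  refine shiftsV_of_e_mul fun j k l => ?_
  rcases j with (_ | n) | n
  · have : e q (Int.ofNat 0) k l * star (αg q) = e q (Int.negSucc 0) k l := by
      simp [e]
    rw [this]
    exact e_mem_V _ le_rfl
  · have hβα : βg q * star (αg q) = (q : ℂ)⁻¹ • (star (αg q) * βg q) :=
      (eq_inv_smul_iff₀ hq).mpr (star_αg_mul_βg q).symm
    have hβ'α : star (βg q) * star (αg q) = (q : ℂ)⁻¹ • (star (αg q) * star (βg q)) :=
      (eq_inv_smul_iff₀ hq).mpr (star_αg_mul_star_βg q).symm
    have hαα : αg q ^ (n + 1) * star (αg q) = αg q ^ n - αg q ^ n * (βg q * star (βg q)) := by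
      rw [pow_succ, mul_assoc, αg_mul_star_αg, mul_sub, mul_one]
    have : e q (n + 1 : ℕ) k l * star (αg q) =
        ((q : ℂ)⁻¹ ^ l * (q : ℂ)⁻¹ ^ k) • (e q n k l - e q n (k + 1) (l + 1)) := by
      rw [e_natCast, e_natCast, e_natCast, mul_assoc, pow_mul_of_mul_eq_smul hβ'α,
        mul_smul_comm, ← mul_assoc, mul_assoc _ (βg q ^ k), pow_mul_of_mul_eq_smul hβα,
        mul_smul_comm, smul_mul_assoc, smul_smul, ← mul_assoc, hαα, mul_assoc (_ - _), sub_mul,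
        mul_assoc (αg q ^ n) (_ * _), βg_mul_star_βg_mul_βg_pow_mul_star_βg_pow, ← mul_assoc,
        ← mul_assoc]
    rw [Int.ofNat_eq_natCast, this]
    exact Submodule.smul_mem _ _ (sub_mem (e_mem_V _ le_rfl) (e_mem_V _ (by omega)))
  · rw [e_negSucc, mul_assoc, ← pow_succ, ← e_negSucc]
    exact e_mem_V _ le_rfl

lemma shiftsV_e (hq : (q : ℂ) ≠ 0) (j : ℤ) (k l : ℕ) : ShiftsV q (e q j k l) (k + l) := by
  rcases j with n | n
  · rw [Int.ofNat_eq_natCast, e_natCast]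
    simpa using ((shiftsV_αg.pow n).mul (shiftsV_βg.pow k)).mul (shiftsV_star_βg.pow l)
  · rw [e_negSucc]
    simpa using ((shiftsV_βg.pow k).mul (shiftsV_star_βg.pow l)).mul
      ((shiftsV_star_αg hq).pow (n + 1))

end Filtration

theorem V_mul_V_subset_general (q : ℝ) (hq0 : 0 < q) (m m' : ℕ) :
    ∀ x ∈ V q m, ∀ y ∈ V q m', x * y ∈ V q (m + m') := by
  have hq : (q : ℂ) ≠ 0 := Complex.ofReal_ne_zero.mpr hq0.ne'
  intro x hx y hy
  induction hy using Submodule.span_induction with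
  | mem y hy =>
    obtain ⟨j, k, l, hkl, rfl⟩ := hy
    exact V_antitone (by omega) (shiftsV_e hq j k l m x hx)
  | zero => simp
  | add y z _ _ hy hz => rw [mul_add]; exact add_mem hy hz
  | smul c y _ hy => rw [mul_smul_comm]; exact Submodule.smul_mem _ c hy

/-- For `0 < q < 1` and `m, m' ∈ ℕ`, one has `V_m · V_{m'} ⊆ V_{m+m'}` in
`A(SU_q(2))`. -/
theorem V_mul_V_subset (q : ℝ) (hq0 : 0 < q) (hq1 : q < 1) (m m' : ℕ) :
    ∀ x ∈ V q m, ∀ y ∈ V q m', x * y ∈ V q (m + m') :=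
  V_mul_V_subset_general q hq0 m m'

end QAlg
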